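/- Let d ≥ 1 and p ≥ 1 be integers and let R be a p × d array of integers such that for every j ∈ {1,…,d} the map i ↦ R_{ij} is a bijection from {1,…,p} onto {1,…,p} (no ties). Let C be the associated empirical copula and let m ≥ 2 be an integer and j ∈ {1,…,d}. Then the Bernstein estimator of the j-th first-order partial derivative satisfies 0 ≤ Ċ^{Bern}_{j,m}(u) ≤ 1 + m/p for every u ∈ [0,1]^d. Consequently, if m = max(⌊L p^θ⌋, 2) for some constants L > 0 and θ ∈ (0,1], then sup_{u ∈ [0,1]^d} |Ċ^{Bern}_{j,m}(u)| ≤ 1 + max(L, 2). -/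

import Mathlib

/-- The Binomial(n,t) probability mass function `b_{n,t}(s) = C(n,s) t^s (1-t)^{n-s}`. -/
noncomputable def binomPMF (n : ℕ) (t : ℝ) (s : ℕ) : ℝ :=
  (n.choose s : ℝ) * t ^ s * (1 - t) ^ (n - s)

/-- The empirical copula associated with a `p × d` array of integer ranks `R`:
`C(w) = (1/p) ∑_{i=1}^p ∏_{j=1}^d 1(R_{ij}/p ≤ w_j)`. -/
noncomputable def empCop (p d : ℕ) (R : Fin p → Fin d → ℕ) (w : Fin d → ℝ) : ℝ :=
  (1 / p : ℝ) * ∑ i : Fin p, ∏ j : Fin d, if (R i j : ℝ) / p ≤ w j then (1 : ℝ) else 0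

/-- The Bernstein estimator of the `j`-th first-order partial derivative of the empirical copula:
`Ċ^{Bern}_{j,m}(u) = m ∑_{s} { C((s+e_j)/m) − C(s/m) } b_{m−1,u_j}(s_j) ∏_{t≠j} b_{m,u_t}(s_t)`,
the sum being over integer vectors `s` with `0 ≤ s_j ≤ m−1` and `0 ≤ s_t ≤ m` for `t ≠ j`. -/
noncomputable def bernEst (p d : ℕ) (R : Fin p → Fin d → ℕ) (m : ℕ) (j : Fin d)
    (u : Fin d → ℝ) : ℝ :=
  (m : ℝ) *
    ∑ s ∈ Finset.univ.filter (fun s : Fin d → Fin (m + 1) => (s j : ℕ) ≤ m - 1),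
      (empCop p d R (fun k => ((s k : ℝ) + if k = j then 1 else 0) / m)
          - empCop p d R (fun k => (s k : ℝ) / m)) *
        binomPMF (m - 1) (u j) (s j) *
        ∏ t ∈ Finset.univ.erase j, binomPMF m (u t) (s t)

lemma binomPMF_nonneg {n s : ℕ} {t : ℝ} (h0 : 0 ≤ t) (h1 : t ≤ 1) : 0 ≤ binomPMF n t s := by
  unfold binomPMF
  have := sub_nonneg.mpr h1
  positivity

lemma binomPMF_sum (n : ℕ) (t : ℝ) : ∑ s ∈ Finset.range (n+1), binomPMF n t s = 1 := by
  have h := add_pow t (1 - t) n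
  simp only [add_sub_cancel, one_pow] at h
  rw [h]
  apply Finset.sum_congr rfl
  intro k _
  unfold binomPMF
  ring

lemma binomPMF_sum_fin (n : ℕ) (t : ℝ) : ∑ s : Fin (n+1), binomPMF n t (s : ℕ) = 1 := by
  rw [Fin.sum_univ_eq_sum_range]
  exact binomPMF_sum n t

lemma binomPMF_sum_fin' (m : ℕ) (hm : 1 ≤ m) (t : ℝ) :
    ∑ s : Fin (m+1), binomPMF (m-1) t (s : ℕ) = 1 := by
  rw [Fin.sum_univ_eq_sum_range]
  have h1 : m - 1 + 1 = m := Nat.succ_pred_eq_of_pos hm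
  rw [show m + 1 = (m - 1 + 1) + 1 by omega, Finset.sum_range_succ]
  have hz : binomPMF (m-1) t (m-1+1) = 0 := by
    unfold binomPMF
    rw [Nat.choose_eq_zero_of_lt (by omega)]
    simp
  rw [hz, add_zero]
  exact binomPMF_sum (m-1) t


lemma ind_mem {c x : ℝ} : (if c ≤ x then (1:ℝ) else 0) = 0 ∨ (if c ≤ x then (1:ℝ) else 0) = 1 := by
  split_ifs <;> simp

lemma empCop_mono (p d : ℕ) (R : Fin p → Fin d → ℕ) {w w' : Fin d → ℝ}
    (h : ∀ k, w k ≤ w' k) : empCop p d R w ≤ empCop p d R w' := by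
  unfold empCop
  apply mul_le_mul_of_nonneg_left _ (by positivity)
  apply Finset.sum_le_sum
  intro i _
  apply Finset.prod_le_prod
  · intro k _; split_ifs <;> norm_num
  · intro k _
    split_ifs with h1 h2
    · norm_num
    · exact absurd (h1.trans (h k)) h2
    · norm_num
    · norm_num

lemma prod_ind_le_one {d : ℕ} (g : Fin d → ℝ) (hg : ∀ k, g k = 0 ∨ g k = 1) :
    ∏ k : Fin d, g k ≤ 1 := by
  apply Finset.prod_le_one
  · intro k _; rcases hg k with h | h <;> simp [h]
  · intro k _; rcases hg k with h | h <;> simp [h]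

lemma empCop_incr_le (p d : ℕ) (hp : 1 ≤ p) (R : Fin p → Fin d → ℕ) (j : Fin d)
    (hinj : Function.Injective (fun i : Fin p => R i j))
    (w w' : Fin d → ℝ)
    (hk : ∀ k, k ≠ j → w' k = w k) (hj : w j ≤ w' j) (h0 : 0 ≤ w j) :
    empCop p d R w' - empCop p d R w ≤
      ((⌊(p : ℝ) * w' j⌋₊ : ℝ) - (⌊(p : ℝ) * w j⌋₊ : ℝ)) / p := by
  have hp0 : (0:ℝ) < p := by exact_mod_cast hp
  unfold empCop
  rw [← mul_sub, ← Finset.sum_sub_distrib]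
  rw [show ((⌊(p : ℝ) * w' j⌋₊ : ℝ) - (⌊(p : ℝ) * w j⌋₊ : ℝ)) / p = 1/(p:ℝ) * ((⌊(p : ℝ) * w' j⌋₊ : ℝ) - (⌊(p : ℝ) * w j⌋₊ : ℝ)) by ring]
  apply mul_le_mul_of_nonneg_left _ (by positivity)
  -- termwise bound by indicator
  have hterm : ∀ i : Fin p,
      (∏ k : Fin d, if (R i k : ℝ) / p ≤ w' k then (1:ℝ) else 0) -
      (∏ k : Fin d, if (R i k : ℝ) / p ≤ w k then (1:ℝ) else 0) ≤
      (if (w j < (R i j : ℝ)/p ∧ (R i j : ℝ)/p ≤ w' j) then (1:ℝ) else 0) := by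
    intro i
    by_cases hle : (R i j : ℝ)/p ≤ w j
    · have heq : (∏ k : Fin d, if (R i k : ℝ) / p ≤ w' k then (1:ℝ) else 0) =
          ∏ k : Fin d, if (R i k : ℝ) / p ≤ w k then (1:ℝ) else 0 := by
        apply Finset.prod_congr rfl
        intro k _
        by_cases hkj : k = j
        · subst hkj; rw [if_pos hle, if_pos (hle.trans hj)]
        · rw [hk k hkj]
      rw [heq, sub_self]
      split_ifs <;> norm_num
    · have hP : (∏ k : Fin d, if (R i k : ℝ) / p ≤ w k then (1:ℝ) else 0) = 0 :=
        Finset.prod_eq_zero (Finset.mem_univ j) (by rw [if_neg hle])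
      rw [hP, sub_zero]
      by_cases hle' : (R i j : ℝ)/p ≤ w' j
      · rw [if_pos ⟨lt_of_not_ge hle, hle'⟩]
        exact prod_ind_le_one _ (fun k => by split_ifs <;> simp)
      · have hP' : (∏ k : Fin d, if (R i k : ℝ) / p ≤ w' k then (1:ℝ) else 0) = 0 :=
          Finset.prod_eq_zero (Finset.mem_univ j) (by rw [if_neg hle'])
        rw [hP', if_neg (by tauto)]
  calc ∑ i : Fin p, ((∏ k : Fin d, if (R i k : ℝ) / p ≤ w' k then (1:ℝ) else 0) -
        (∏ k : Fin d, if (R i k : ℝ) / p ≤ w k then (1:ℝ) else 0))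
      ≤ ∑ i : Fin p, (if (w j < (R i j : ℝ)/p ∧ (R i j : ℝ)/p ≤ w' j) then (1:ℝ) else 0) :=
        Finset.sum_le_sum (fun i _ => hterm i)
    _ = ((Finset.univ.filter (fun i : Fin p => w j < (R i j : ℝ)/p ∧ (R i j : ℝ)/p ≤ w' j)).card : ℝ) := by
        rw [Finset.sum_boole]
    _ ≤ ((⌊(p : ℝ) * w' j⌋₊ : ℝ) - (⌊(p : ℝ) * w j⌋₊ : ℝ)) := by
        have hcard : (Finset.univ.filter (fun i : Fin p => w j < (R i j : ℝ)/p ∧ (R i j : ℝ)/p ≤ w' j)).card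
            ≤ (Finset.Ioc ⌊(p : ℝ) * w j⌋₊ ⌊(p : ℝ) * w' j⌋₊).card := by
          apply Finset.card_le_card_of_injOn (fun i => R i j)
          · intro i hi
            rw [Finset.mem_coe, Finset.mem_filter] at hi
            obtain ⟨-, h1, h2⟩ := hi
            rw [Finset.mem_coe, Finset.mem_Ioc]
            constructor
            · rw [Nat.floor_lt (mul_nonneg hp0.le h0)]
              calc (p:ℝ) * w j < p * ((R i j : ℝ)/p) := by
                    exact mul_lt_mul_of_pos_left h1 hp0
                _ = (R i j : ℝ) := by field_simp
            · rw [Nat.le_floor_iff (mul_nonneg hp0.le (h0.trans hj))]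
              calc (R i j : ℝ) = p * ((R i j : ℝ)/p) := by field_simp
                _ ≤ p * w' j := mul_le_mul_of_nonneg_left h2 (le_of_lt hp0)
          · intro a _ b _ hab
            exact hinj hab
        have hmono : ⌊(p : ℝ) * w j⌋₊ ≤ ⌊(p : ℝ) * w' j⌋₊ :=
          Nat.floor_mono (mul_le_mul_of_nonneg_left hj (le_of_lt hp0))
        rw [Nat.card_Ioc] at hcard
        calc ((Finset.univ.filter (fun i : Fin p => w j < (R i j : ℝ)/p ∧ (R i j : ℝ)/p ≤ w' j)).card : ℝ)
            ≤ ((⌊(p : ℝ) * w' j⌋₊ - ⌊(p : ℝ) * w j⌋₊ : ℕ) : ℝ) := by exact_mod_cast hcard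
          _ = ((⌊(p : ℝ) * w' j⌋₊ : ℝ) - (⌊(p : ℝ) * w j⌋₊ : ℝ)) := by
              rw [Nat.cast_sub hmono]


lemma weight_eq (d m : ℕ) (j : Fin d) (u : Fin d → ℝ) (s : Fin d → Fin (m+1)) :
    binomPMF (m - 1) (u j) (s j) * ∏ t ∈ Finset.univ.erase j, binomPMF m (u t) (s t)
      = ∏ k : Fin d, (if k = j then binomPMF (m-1) (u j) (s k) else binomPMF m (u k) (s k)) := by
  rw [← Finset.mul_prod_erase Finset.univ _ (Finset.mem_univ j)]
  congr 1
  · simp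
  · apply Finset.prod_congr rfl
    intro t ht
    rw [if_neg (Finset.ne_of_mem_erase ht)]

lemma weight_sum_le_one (d m : ℕ) (hm : 1 ≤ m) (j : Fin d) (u : Fin d → ℝ)
    (hu : ∀ k, u k ∈ Set.Icc (0:ℝ) 1) :
    ∑ s ∈ Finset.univ.filter (fun s : Fin d → Fin (m + 1) => (s j : ℕ) ≤ m - 1),
      binomPMF (m - 1) (u j) (s j) * ∏ t ∈ Finset.univ.erase j, binomPMF m (u t) (s t) ≤ 1 := by
  have hnn : ∀ s : Fin d → Fin (m+1),
      0 ≤ binomPMF (m - 1) (u j) (s j) * ∏ t ∈ Finset.univ.erase j, binomPMF m (u t) (s t) := by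
    intro s
    apply mul_nonneg (binomPMF_nonneg (hu j).1 (hu j).2)
    exact Finset.prod_nonneg fun t _ => binomPMF_nonneg (hu t).1 (hu t).2
  calc _ ≤ ∑ s : Fin d → Fin (m+1),
        binomPMF (m - 1) (u j) (s j) * ∏ t ∈ Finset.univ.erase j, binomPMF m (u t) (s t) :=
        Finset.sum_le_sum_of_subset_of_nonneg (Finset.filter_subset _ _) (fun s _ _ => hnn s)
    _ = 1 := by
        simp_rw [weight_eq d m j u]
        rw [← Fintype.piFinset_univ, ← Finset.prod_univ_sum
          (t := fun _ : Fin d => (Finset.univ : Finset (Fin (m+1))))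
          (f := fun k a => if k = j then binomPMF (m-1) (u j) (a:ℕ) else binomPMF m (u k) (a:ℕ))]
        rw [Finset.prod_eq_one]
        intro k _
        by_cases hkj : k = j
        · subst hkj
          simp only [if_pos rfl]
          exact binomPMF_sum_fin' m hm (u k)
        · simp only [if_neg hkj]
          exact binomPMF_sum_fin m (u k)


/-- Under the no-ties condition (each column of the rank array `R` is a
bijection of `{1,…,p}`, expressed as injectivity together with `R_{ij} ∈ {1,…,p}`), for `m ≥ 2`
and `j ∈ {1,…,d}` the Bernstein estimator satisfies `0 ≤ Ċ^{Bern}_{j,m}(u) ≤ 1 + m/p` for every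
`u ∈ [0,1]^d`.  Consequently, if `m = max(⌊L p^θ⌋, 2)` for constants `L > 0` and `θ ∈ (0,1]`,
then `sup_{u ∈ [0,1]^d} |Ċ^{Bern}_{j,m}(u)| ≤ 1 + max(L, 2)`. -/
theorem stmt_12 (d p : ℕ) (hd : 1 ≤ d) (hp : 1 ≤ p)
    (R : Fin p → Fin d → ℕ)
    (hR : ∀ i j, R i j ∈ Finset.Icc 1 p)
    (hinj : ∀ j, Function.Injective (fun i : Fin p => R i j))
    (m : ℕ) (hm : 2 ≤ m) (j : Fin d) :
    (∀ u : Fin d → ℝ, (∀ k, u k ∈ Set.Icc (0 : ℝ) 1) →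
      0 ≤ bernEst p d R m j u ∧ bernEst p d R m j u ≤ 1 + (m : ℝ) / p) ∧
    (∀ L θ : ℝ, 0 < L → θ ∈ Set.Ioc (0 : ℝ) 1 →
      m = max (⌊L * (p : ℝ) ^ θ⌋.toNat) 2 →
      ∀ u : Fin d → ℝ, (∀ k, u k ∈ Set.Icc (0 : ℝ) 1) →
        |bernEst p d R m j u| ≤ 1 + max L 2) := by
  have hp0 : (0:ℝ) < p := by exact_mod_cast hp
  have hm0 : (0:ℝ) < m := by exact_mod_cast (by omega : 0 < m)
  have key : ∀ u : Fin d → ℝ, (∀ k, u k ∈ Set.Icc (0 : ℝ) 1) →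
      0 ≤ bernEst p d R m j u ∧ bernEst p d R m j u ≤ 1 + (m : ℝ) / p := by
    intro u hu
    have hBnn : ∀ s : Fin d → Fin (m+1),
        0 ≤ binomPMF (m - 1) (u j) (s j) * ∏ t ∈ Finset.univ.erase j, binomPMF m (u t) (s t) := by
      intro s
      exact mul_nonneg (binomPMF_nonneg (hu j).1 (hu j).2)
        (Finset.prod_nonneg fun t _ => binomPMF_nonneg (hu t).1 (hu t).2)
    have hΔnn : ∀ s : Fin d → Fin (m+1),
        0 ≤ empCop p d R (fun k => ((s k : ℝ) + if k = j then 1 else 0) / m)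
            - empCop p d R (fun k => (s k : ℝ) / m) := by
      intro s
      rw [sub_nonneg]
      apply empCop_mono
      intro k
      gcongr
      apply le_add_of_nonneg_right
      split_ifs <;> norm_num
    have hΔle : ∀ s : Fin d → Fin (m+1),
        empCop p d R (fun k => ((s k : ℝ) + if k = j then 1 else 0) / m)
            - empCop p d R (fun k => (s k : ℝ) / m) ≤ 1/(m:ℝ) + 1/(p:ℝ) := by
      intro s
      have hstep := empCop_incr_le p d hp R j (hinj j)
        (fun k => (s k : ℝ) / m) (fun k => ((s k : ℝ) + if k = j then 1 else 0) / m)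
        (fun k hk => by simp [if_neg hk])
        (by show (s j : ℝ)/m ≤ ((s j : ℝ) + if j = j then 1 else 0)/m
            rw [if_pos rfl]; gcongr <;> linarith)
        (by positivity)
      refine hstep.trans ?_
      have hite : (if j = j then (1:ℝ) else 0) = 1 := if_pos rfl
      simp only [hite, if_true]
      rw [div_le_iff₀ hp0]
      have hb : (⌊(p:ℝ) * (((s j : ℝ) + 1) / m)⌋₊ : ℝ)
          ≤ (p:ℝ) * (((s j : ℝ) + 1) / m) := Nat.floor_le (by positivity)
      have ha : (p:ℝ) * ((s j : ℝ) / m) - 1 < (⌊(p:ℝ) * ((s j : ℝ) / m)⌋₊ : ℝ) :=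
        Nat.sub_one_lt_floor _
      have hexp : (1/(m:ℝ) + 1/(p:ℝ)) * p = (p:ℝ)/m + 1 := by field_simp
      rw [hexp]
      have hr : (p:ℝ) * (((s j : ℝ) + 1) / m) = (p:ℝ) * ((s j : ℝ)/m) + (p:ℝ)/m := by ring
      linarith [hb, ha]
    constructor
    · apply mul_nonneg hm0.le
      apply Finset.sum_nonneg
      intro s _
      exact mul_nonneg (mul_nonneg (hΔnn s) (binomPMF_nonneg (hu j).1 (hu j).2))
        (Finset.prod_nonneg fun t _ => binomPMF_nonneg (hu t).1 (hu t).2)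
    · unfold bernEst
      have hsum : ∑ s ∈ Finset.univ.filter (fun s : Fin d → Fin (m + 1) => (s j : ℕ) ≤ m - 1),
          (empCop p d R (fun k => ((s k : ℝ) + if k = j then 1 else 0) / m)
              - empCop p d R (fun k => (s k : ℝ) / m)) *
            binomPMF (m - 1) (u j) (s j) *
            ∏ t ∈ Finset.univ.erase j, binomPMF m (u t) (s t)
          ≤ (1/(m:ℝ) + 1/(p:ℝ)) * 1 := by
        calc _ ≤ ∑ s ∈ Finset.univ.filter (fun s : Fin d → Fin (m + 1) => (s j : ℕ) ≤ m - 1),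
              (1/(m:ℝ) + 1/(p:ℝ)) *
                (binomPMF (m - 1) (u j) (s j) *
                  ∏ t ∈ Finset.univ.erase j, binomPMF m (u t) (s t)) := by
              apply Finset.sum_le_sum
              intro s _
              rw [mul_assoc]
              exact mul_le_mul_of_nonneg_right (hΔle s) (hBnn s)
          _ = (1/(m:ℝ) + 1/(p:ℝ)) *
              ∑ s ∈ Finset.univ.filter (fun s : Fin d → Fin (m + 1) => (s j : ℕ) ≤ m - 1),
                binomPMF (m - 1) (u j) (s j) *
                  ∏ t ∈ Finset.univ.erase j, binomPMF m (u t) (s t) := by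
              rw [Finset.mul_sum]
          _ ≤ (1/(m:ℝ) + 1/(p:ℝ)) * 1 := by
              apply mul_le_mul_of_nonneg_left
                (weight_sum_le_one d m (by omega) j u hu) (by positivity)
      calc (m:ℝ) * _ ≤ (m:ℝ) * ((1/(m:ℝ) + 1/(p:ℝ)) * 1) :=
            mul_le_mul_of_nonneg_left hsum hm0.le
        _ = 1 + (m:ℝ)/p := by field_simp
  refine ⟨key, ?_⟩
  intro L θ hL hθ hmeq u hu
  obtain ⟨h0, h1⟩ := key u hu
  rw [abs_of_nonneg h0]
  refine h1.trans ?_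
  have hmp : (m:ℝ)/p ≤ max L 2 := by
    rcases le_or_gt (⌊L * (p : ℝ) ^ θ⌋.toNat) 2 with hc | hc
    · have : m = 2 := by omega
      rw [this]
      refine le_trans ?_ (le_max_right L 2)
      rw [div_le_iff₀ hp0]
      have hp1 : (1:ℝ) ≤ p := by exact_mod_cast hp
      push_cast
      linarith
    · have hma : m = ⌊L * (p : ℝ) ^ θ⌋.toNat := by omega
      have hfl : (0:ℤ) ≤ ⌊L * (p : ℝ) ^ θ⌋ := by
        by_contra h
        push_neg at h
        have : ⌊L * (p : ℝ) ^ θ⌋.toNat = 0 := Int.toNat_of_nonpos h.le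
        omega
      have h2 : ((⌊L * (p : ℝ) ^ θ⌋.toNat : ℕ) : ℝ) ≤ L * (p : ℝ) ^ θ := by
        rw [← Int.cast_natCast, Int.toNat_of_nonneg hfl]
        exact Int.floor_le _
      have h3 : (p:ℝ) ^ θ ≤ (p:ℝ) := by
        calc (p:ℝ) ^ θ ≤ (p:ℝ) ^ (1:ℝ) :=
              Real.rpow_le_rpow_of_exponent_le (by exact_mod_cast hp) hθ.2
          _ = p := Real.rpow_one _
      refine le_trans ?_ (le_max_left L 2)
      rw [div_le_iff₀ hp0, hma]
      calc ((⌊L * (p : ℝ) ^ θ⌋.toNat : ℕ) : ℝ) ≤ L * (p : ℝ) ^ θ := h2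
        _ ≤ L * p := by nlinarith
  linarith
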